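/- arXiv:1607.02455 — 3 statements merged into one kernel-verified Lean document; each statement's English description precedes it below -/
import Mathlib

section
/- Let u be a positive, monotonically increasing real sequence with u_n → ∞ as n → ∞, and let p, q, s be real sequences. Then s_n → s (V, p, q, u) if and only if the sequence (p∘qs)_n admits a decomposition (p∘qs)_n = v_n a_n + b_n, where a_n → s as n → ∞ and the series ∑_{n=0}^∞ b_n/u_n converges. -/
open Filter Finset Topology

/-- The Voronoi convolution `(a∘b)` of two sequences:
`(a∘b)_0 = a_0 b_0`, `(a∘b)_n = ∑_{k=0}^n a_{n-k} b_k - ∑_{k=0}^{n-1} a_{n-1-k} b_k`. -/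
noncomputable def vconv (a b : ℕ → ℝ) : ℕ → ℝ
  | 0 => a 0 * b 0
  | n + 1 => (∑ k ∈ Finset.range (n + 2), a (n + 1 - k) * b k)
      - ∑ k ∈ Finset.range (n + 1), a (n - k) * b k

/-- The Voronoi mean transform `t_n = (1/u_n) ∑_{k=0}^n p_{n-k} q_k s_k`. -/
noncomputable def vT (p q u s : ℕ → ℝ) (n : ℕ) : ℝ :=
  (1 / u n) * ∑ k ∈ Finset.range (n + 1), p (n - k) * q k * s k

/-- Increments: `v_0 = u_0`, `v_n = u_n - u_{n-1}` for `n ≥ 1`. -/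
noncomputable def inc (u : ℕ → ℝ) : ℕ → ℝ
  | 0 => u 0
  | n + 1 => u (n + 1) - u n

/-!
The Voronoi mean is `t_n = C_n / u_n` with `C_n = ∑_{k ≤ n} c_k` and `c = p∘qs`, so the theorem is
a statement about an arbitrary sequence `c`. If `C_n / u_n → s`, take `a_n := C_{n-1} / u_{n-1}`
(and `a_0 := 0`); then `b_n := c_n - v_n a_n` satisfies `b_n / u_n = a_{n+1} - a_n`, so the series
`∑ b_n / u_n` telescopes to `a_N`. Conversely `C_n / u_n` splits into `(∑_{k ≤ n} v_k a_k) / u_n`,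
a weighted mean of `a` with weights `v_k ≥ 0` summing to `u_n → ∞`, and `(∑_{k ≤ n} b_k) / u_n`,
which tends to `0` by Kronecker's lemma: Abel summation rewrites it as `E_{n+1}` minus a weighted
mean of the partial sums `E_k` of `∑ b_k / u_k`, and both tend to the sum of that series.
-/

lemma sum_range_succ_vconv (a b : ℕ → ℝ) (n : ℕ) :
    ∑ k ∈ range (n + 1), vconv a b k = ∑ k ∈ range (n + 1), a (n - k) * b k := by
  induction n with
  | zero => simp [vconv]
  | succ n ih =>
    rw [sum_range_succ, ih, vconv]
    ring

lemma sum_range_succ_inc (u : ℕ → ℝ) (n : ℕ) : ∑ k ∈ range (n + 1), inc u k = u n := by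
  induction n with
  | zero => simp [inc]
  | succ n ih =>
    rw [sum_range_succ, ih, inc]
    ring

lemma inc_nonneg {u : ℕ → ℝ} (hu₀ : 0 ≤ u 0) (hu_mono : Monotone u) (n : ℕ) : 0 ≤ inc u n := by
  cases n with
  | zero => exact hu₀
  | succ n => exact sub_nonneg.2 (hu_mono n.le_succ)

lemma vT_eq_sum_vconv_div (p q u s : ℕ → ℝ) (n : ℕ) :
    vT p q u s n = (∑ k ∈ range (n + 1), vconv p (fun k => q k * s k) k) / u n := by
  rw [vT, sum_range_succ_vconv, one_div_mul_eq_div]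
  simp only [mul_assoc]

theorem Filter.Tendsto.weighted_cesaro {w c : ℕ → ℝ} {l : ℝ} (hc : Tendsto c atTop (𝓝 l))
    (hw : 0 ≤ w) (hW : Tendsto (fun n => ∑ k ∈ range n, w k) atTop atTop) :
    Tendsto (fun n => (∑ k ∈ range n, w k * c k) / ∑ k ∈ range n, w k) atTop (𝓝 l) := by
  have hsmall : (fun k => w k * (c k - l)) =o[atTop] w := by
    simpa using (Asymptotics.isBigO_refl w atTop).mul_isLittleO
      ((Asymptotics.isLittleO_one_iff ℝ).2 (tendsto_sub_nhds_zero_iff.2 hc))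
  have hdev := ((hsmall.sum_range hw hW).tendsto_div_nhds_zero).add_const l
  rw [zero_add] at hdev
  refine hdev.congr' ?_
  filter_upwards [hW.eventually_gt_atTop 0] with n hn
  simp only [mul_sub, sum_sub_distrib, ← sum_mul]
  field_simp
  ring

theorem Filter.Tendsto.sum_inc_mul_div {u c : ℕ → ℝ} {l : ℝ} (hc : Tendsto c atTop (𝓝 l))
    (hu₀ : 0 ≤ u 0) (hu_mono : Monotone u) (hu_top : Tendsto u atTop atTop) :
    Tendsto (fun n => (∑ k ∈ range (n + 1), inc u k * c k) / u n) atTop (𝓝 l) := by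
  have hW : Tendsto (fun n => ∑ k ∈ range n, inc u k) atTop atTop := by
    rw [← tendsto_add_atTop_iff_nat 1]
    simpa only [sum_range_succ_inc] using hu_top
  have := (hc.weighted_cesaro (inc_nonneg hu₀ hu_mono) hW).comp (tendsto_add_atTop_nat 1)
  simpa only [Function.comp_def, sum_range_succ_inc] using this

lemma sum_range_succ_mul_sub (u E : ℕ → ℝ) (n : ℕ) :
    ∑ k ∈ range (n + 1), u k * (E (k + 1) - E k)
      = u n * E (n + 1) - ∑ k ∈ range (n + 1), inc u k * E k := by
  induction n with
  | zero => simp [inc, mul_sub]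
  | succ n ih =>
    rw [sum_range_succ, ih, sum_range_succ _ (n + 1), inc]
    ring

theorem Filter.Tendsto.kronecker {u b : ℕ → ℝ} {L : ℝ}
    (hb : Tendsto (fun N => ∑ n ∈ range N, b n / u n) atTop (𝓝 L))
    (hu_pos : ∀ n, 0 < u n) (hu_mono : Monotone u) (hu_top : Tendsto u atTop atTop) :
    Tendsto (fun n => (∑ k ∈ range (n + 1), b k) / u n) atTop (𝓝 0) := by
  set E := fun N => ∑ n ∈ range N, b n / u n
  have hb_eq : ∀ k, b k = u k * (E (k + 1) - E k) := fun k => by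
    simp only [E, sum_range_succ, add_sub_cancel_left, mul_div_cancel₀ _ (hu_pos k).ne']
  have hlim := (hb.comp (tendsto_add_atTop_nat 1)).sub
    (hb.sum_inc_mul_div (hu_pos 0).le hu_mono hu_top)
  rw [sub_self] at hlim
  refine hlim.congr fun n => ?_
  simp only [Function.comp_apply, hb_eq, sum_range_succ_mul_sub, sub_div,
    mul_div_cancel_left₀ _ (hu_pos n).ne']

lemma exists_decomposition_of_tendsto_sum_div {u c : ℕ → ℝ} {l : ℝ} (hu : ∀ n, u n ≠ 0)
    (hc : Tendsto (fun n => (∑ k ∈ range (n + 1), c k) / u n) atTop (𝓝 l)) :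
    ∃ a b : ℕ → ℝ, (∀ n, c n = inc u n * a n + b n) ∧ Tendsto a atTop (𝓝 l) ∧
      ∃ L : ℝ, Tendsto (fun N => ∑ n ∈ range N, b n / u n) atTop (𝓝 L) := by
  set T := fun n => (∑ k ∈ range (n + 1), c k) / u n
  let a : ℕ → ℝ := fun
    | 0 => 0
    | n + 1 => T n
  have ha : Tendsto a atTop (𝓝 l) := (tendsto_add_atTop_iff_nat 1).1 hc
  have hstep : ∀ n, (c n - inc u n * a n) / u n = a (n + 1) - a n := by
    rintro (_ | n)
    · simp [a, T]
    · have hT : u (n + 1) * T (n + 1) = u n * T n + c (n + 1) := by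
        simp only [T, mul_div_cancel₀ _ (hu _), sum_range_succ _ (n + 1)]
      show (c (n + 1) - (u (n + 1) - u n) * T n) / u (n + 1) = T (n + 1) - T n
      rw [div_eq_iff (hu _)]
      linear_combination -hT
  refine ⟨a, fun n => c n - inc u n * a n, fun n => by ring, ha, l, ?_⟩
  have ha₀ : a 0 = 0 := rfl
  simpa only [hstep, sum_range_sub, ha₀, sub_zero] using ha

lemma tendsto_sum_div_of_decomposition {u c a b : ℕ → ℝ} {l L : ℝ}
    (hu_pos : ∀ n, 0 < u n) (hu_mono : Monotone u) (hu_top : Tendsto u atTop atTop)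
    (hcab : ∀ n, c n = inc u n * a n + b n) (ha : Tendsto a atTop (𝓝 l))
    (hb : Tendsto (fun N => ∑ n ∈ range N, b n / u n) atTop (𝓝 L)) :
    Tendsto (fun n => (∑ k ∈ range (n + 1), c k) / u n) atTop (𝓝 l) := by
  have hlim := (ha.sum_inc_mul_div (hu_pos 0).le hu_mono hu_top).add
    (hb.kronecker hu_pos hu_mono hu_top)
  rw [add_zero] at hlim
  simpa only [hcab, sum_add_distrib, add_div] using hlim

theorem tendsto_sum_div_iff_exists_decomposition {u c : ℕ → ℝ} {l : ℝ}
    (hu_pos : ∀ n, 0 < u n) (hu_mono : Monotone u) (hu_top : Tendsto u atTop atTop) :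
    Tendsto (fun n => (∑ k ∈ range (n + 1), c k) / u n) atTop (𝓝 l) ↔
      ∃ a b : ℕ → ℝ, (∀ n, c n = inc u n * a n + b n) ∧ Tendsto a atTop (𝓝 l) ∧
        ∃ L : ℝ, Tendsto (fun N => ∑ n ∈ range N, b n / u n) atTop (𝓝 L) := by
  refine ⟨exists_decomposition_of_tendsto_sum_div fun n => (hu_pos n).ne', ?_⟩
  rintro ⟨a, b, hcab, ha, L, hb⟩
  exact tendsto_sum_div_of_decomposition hu_pos hu_mono hu_top hcab ha hb

/-- Theorem 1: for positive, monotonically increasing `u` tending to `∞`,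
`s_n → s (V,p,q,u)` iff `(p∘qs)_n = v_n a_n + b_n` with `a_n → s` and `∑ b_n/u_n` convergent. -/
theorem voronoi_mean_iff_decomposition (p q u s : ℕ → ℝ) (sVal : ℝ)
    (hu_pos : ∀ n, 0 < u n) (hu_mono : Monotone u)
    (hu_top : Tendsto u atTop atTop) :
    Tendsto (vT p q u s) atTop (𝓝 sVal) ↔
      ∃ a b : ℕ → ℝ,
        (∀ n, vconv p (fun k => q k * s k) n = inc u n * a n + b n) ∧
          Tendsto a atTop (𝓝 sVal) ∧
          ∃ L : ℝ, Tendsto (fun N => ∑ n ∈ Finset.range N, b n / u n) atTop (𝓝 L) := by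
  rw [funext (vT_eq_sum_vconv_div p q u s)]
  exact tendsto_sum_div_iff_exists_decomposition hu_pos hu_mono hu_top
end

section
/- Let u, q, ũ, q̃ be positive real sequences such that u_{n+1}/u_n → 1 as n → ∞, ũ_n → ∞ as n → ∞, and (1/ũ_n)·∑_{k=0}^n q̃_k·(u_k/q_k) → 1 as n → ∞ (i.e. u_n/q_n → 1 (V, 1, q̃, ũ)). If s is a real sequence with s_n → s (V, 1, q, u), i.e. (1/u_n)·∑_{k=0}^n q_k s_k → s, then s_n → 0 (V, 1, q̃, ũ), i.e. (1/ũ_n)·∑_{k=0}^n q̃_k s_k → 0 as n → ∞. -/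
open Filter Finset Topology Asymptotics

/-!
Writing `t_n` for the `(V, 1, q, u)` mean of `s`, one has
`q_{n+1} s_{n+1} / u_{n+1} = t_{n+1} - (u_n / u_{n+1}) t_n`, which tends to `s - s = 0` because
`u_n / u_{n+1} → 1`. Hence `q̃_k s_k = c_k e_k` with weights `c_k = q̃_k u_k / q_k ≥ 0` and
`e_k = q_k s_k / u_k → 0`. The hypothesis on `u_n / q_n` says that the `c`-weighted sums are
asymptotic to `ũ_n → ∞`, so averaging a null sequence `e` against them gives a null sequence.
-/

/-- `voronoiMean q u s → σ` is `s_n → σ (V, 1, q, u)`. -/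
noncomputable def voronoiMean (q u s : ℕ → ℝ) (n : ℕ) : ℝ :=
  (1 / u n) * ∑ k ∈ range (n + 1), q k * s k

lemma voronoiMean_succ {q u s : ℕ → ℝ} {n : ℕ} (hn : u n ≠ 0) :
    voronoiMean q u s (n + 1) =
      u n / u (n + 1) * voronoiMean q u s n + q (n + 1) * s (n + 1) / u (n + 1) := by
  simp only [voronoiMean, sum_range_succ _ (n + 1)]
  field_simp

lemma tendsto_mul_div_zero_of_tendsto_voronoiMean {q u s : ℕ → ℝ} {σ : ℝ} (hu : ∀ n, u n ≠ 0)
    (hratio : Tendsto (fun n => u (n + 1) / u n) atTop (𝓝 1))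
    (hV : Tendsto (voronoiMean q u s) atTop (𝓝 σ)) :
    Tendsto (fun n => q n * s n / u n) atTop (𝓝 0) := by
  have hinv : Tendsto (fun n => u n / u (n + 1)) atTop (𝓝 1) := by
    simpa only [inv_div, inv_one] using hratio.inv₀ one_ne_zero
  have hdiff : Tendsto (fun n => voronoiMean q u s (n + 1) - u n / u (n + 1) * voronoiMean q u s n)
      atTop (𝓝 (σ - 1 * σ)) :=
    (hV.comp (tendsto_add_atTop_nat 1)).sub (hinv.mul hV)
  rw [← tendsto_add_atTop_iff_nat 1]
  simpa only [voronoiMean_succ (hu _), add_sub_cancel_left, one_mul, sub_self] using hdiff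

lemma tendsto_voronoiMean_zero {q u e : ℕ → ℝ} {L : ℝ} (hq : 0 ≤ q)
    (hu : Tendsto u atTop atTop) (hmass : Tendsto (voronoiMean q u 1) atTop (𝓝 L)) (hL : 0 < L)
    (he : Tendsto e atTop (𝓝 0)) :
    Tendsto (voronoiMean q u e) atTop (𝓝 0) := by
  have hmass_eq :
      (fun n => ∑ k ∈ range (n + 1), q k) =ᶠ[atTop] fun n => u n * voronoiMean q u 1 n := by
    filter_upwards [hu.eventually_gt_atTop 0] with n hn
    simp only [voronoiMean, Pi.one_apply, mul_one]
    field_simp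
  have hdiv : Tendsto (fun n => ∑ k ∈ range n, q k) atTop atTop := by
    rw [← tendsto_add_atTop_iff_nat 1]
    exact (hu.atTop_mul_pos hL hmass).congr' hmass_eq.symm
  have hqe : (fun k => q k * e k) =o[atTop] q := by
    simpa using (isBigO_refl q atTop).mul_isLittleO ((isLittleO_one_iff ℝ).2 he)
  have hsum : (fun n => ∑ k ∈ range (n + 1), q k * e k) =o[atTop] u :=
    ((hqe.sum_range hq hdiv).comp_tendsto (tendsto_add_atTop_nat 1)).trans_isBigO <|
      (isBigO_refl u atTop).mul (hmass.isBigO_one ℝ) |>.congr' hmass_eq.symm (by simp)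
  refine hsum.tendsto_div_nhds_zero.congr fun n => ?_
  rw [voronoiMean, one_div, inv_mul_eq_div]

theorem voronoi_kronecker_type_general (u q ut qt s : ℕ → ℝ) (sVal : ℝ)
    (hu_pos : ∀ n, 0 < u n) (hq_pos : ∀ n, 0 < q n)
    (hqt_pos : ∀ n, 0 < qt n)
    (hratio : Tendsto (fun n => u (n + 1) / u n) atTop (𝓝 1))
    (hut_top : Tendsto ut atTop atTop)
    (hreg : Tendsto
      (fun n => (1 / ut n) * ∑ k ∈ Finset.range (n + 1), qt k * (u k / q k))
      atTop (𝓝 1))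
    (hV : Tendsto
      (fun n => (1 / u n) * ∑ k ∈ Finset.range (n + 1), q k * s k)
      atTop (𝓝 sVal)) :
    Tendsto (fun n => (1 / ut n) * ∑ k ∈ Finset.range (n + 1), qt k * s k)
      atTop (𝓝 0) := by
  have he : Tendsto (fun n => q n * s n / u n) atTop (𝓝 0) :=
    tendsto_mul_div_zero_of_tendsto_voronoiMean (fun n => (hu_pos n).ne') hratio hV
  have hweights : 0 ≤ fun k => qt k * (u k / q k) := fun k =>
    (mul_pos (hqt_pos k) (div_pos (hu_pos k) (hq_pos k))).le
  have hmass : Tendsto (voronoiMean (fun k => qt k * (u k / q k)) ut 1) atTop (𝓝 1) :=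
    hreg.congr fun n => by simp only [voronoiMean, Pi.one_apply, mul_one]
  refine (tendsto_voronoiMean_zero hweights hut_top hmass one_pos he).congr fun n => ?_
  refine congrArg _ (sum_congr rfl fun k _ => ?_)
  field_simp [(hu_pos k).ne', (hq_pos k).ne']

/-- Theorem 4: let `u, q, ũ, q̃` be positive with `u_{n+1}/u_n → 1`,
`ũ_n → ∞`, and `u_n/q_n → 1 (V,1,q̃,ũ)`. If `s_n → s (V,1,q,u)` then `s_n → 0 (V,1,q̃,ũ)`. -/
theorem voronoi_kronecker_type (u q ut qt s : ℕ → ℝ) (sVal : ℝ)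
    (hu_pos : ∀ n, 0 < u n) (hq_pos : ∀ n, 0 < q n)
    (hut_pos : ∀ n, 0 < ut n) (hqt_pos : ∀ n, 0 < qt n)
    (hratio : Tendsto (fun n => u (n + 1) / u n) atTop (𝓝 1))
    (hut_top : Tendsto ut atTop atTop)
    (hreg : Tendsto
      (fun n => (1 / ut n) * ∑ k ∈ Finset.range (n + 1), qt k * (u k / q k))
      atTop (𝓝 1))
    (hV : Tendsto
      (fun n => (1 / u n) * ∑ k ∈ Finset.range (n + 1), q k * s k)
      atTop (𝓝 sVal)) :
    Tendsto (fun n => (1 / ut n) * ∑ k ∈ Finset.range (n + 1), qt k * s k)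
      atTop (𝓝 0) :=
  voronoi_kronecker_type_general u q ut qt s sVal hu_pos hq_pos hqt_pos hratio hut_top hreg hV
end

section
/- Let u: [0,∞) → (0,∞) be continuous, strictly increasing to ∞ (hence invertible) with u(x)/u(⌊x⌋) → 1 as x → ∞, and let p, q, s be real sequences. Then t_x := (1/u(x))·∑_{0 ≤ k ≤ x} (p∘qs)_k → s as x → ∞ through real values if and only if for every λ > 1, c_x(λ) := (1/u(x))·∑_{w_λ(x) < k ≤ x} (p∘qs)_k → (1 − λ⁻¹)·s as x → ∞ through real values. -/
open Filter Finset Topology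

/-- `w_λ(x) = u⁻¹(u(x)/λ)`, the inverse taken on `[0,∞)`. -/
noncomputable def wl (u : ℝ → ℝ) (lam x : ℝ) : ℝ :=
  Function.invFunOn u (Set.Ici 0) (u x / lam)

/-- The Voronoi moving average `c_x = (1/u(x)) ∑_{w_λ(x) < k ≤ x} a_k`. -/
noncomputable def movAvg (u : ℝ → ℝ) (a : ℕ → ℝ) (lam x : ℝ) : ℝ :=
  (1 / u x) * ∑ k ∈ Finset.range (⌊x⌋₊ + 1),
    if wl u lam x < (k : ℝ) then a k else 0

/-- The continuous Voronoi mean `t_x = (1/u(x)) ∑_{0 ≤ k ≤ x} a_k`. -/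
noncomputable def contMean (u : ℝ → ℝ) (a : ℕ → ℝ) (x : ℝ) : ℝ :=
  (1 / u x) * ∑ k ∈ Finset.range (⌊x⌋₊ + 1), a k

/-!
For large `x`, `c_x(λ) = t_x - λ⁻¹ t_{w_λ(x)}` with `w_λ(x) → ∞`, which gives the forward
implication. Conversely, for `λ = 2` this reads `t_x = c_x(2) + t_{w₂(x)} / 2` with
`u(w₂(x)) = u(x) / 2`. Following `w₂` down to a compact range shows that `t` is eventually
bounded, and then the error `|t_x - s|` contracts by the factor `1/2` along `w₂`, so it tends
to `0`.
-/

theorem sum_range_ite_le_eq_sub {M : Type*} [AddCommGroup M] (f : ℕ → M) {m n : ℕ}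
    (h : m ≤ n) :
    ∑ k ∈ range n, (if m ≤ k then f k else 0) = ∑ k ∈ range n, f k - ∑ k ∈ range m, f k := by
  rw [← sum_filter, ← sum_Ico_eq_sub _ h]
  congr 1
  ext k
  simp [and_comm]

theorem abs_le_max_of_descent {α : Type*} {D : Set α} {f v : α → ℝ} {g : α → α}
    {A B K r : ℝ} (hA : 0 < A) (hr₀ : 0 ≤ r) (hr₁ : r < 1)
    (hbase : ∀ x ∈ D, v x ≤ A → |f x| ≤ K)
    (hstep : ∀ x ∈ D, A < v x → g x ∈ D ∧ 2 * v (g x) ≤ v x ∧ |f x| ≤ B + r * |f (g x)|) :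
    ∀ x ∈ D, |f x| ≤ max K (B / (1 - r)) := by
  set M := max K (B / (1 - r))
  have hBM : B + r * M ≤ M := by
    have : B ≤ (1 - r) * M := (div_le_iff₀' (by linarith)).1 (le_max_right _ _)
    linarith
  suffices h : ∀ n : ℕ, ∀ x ∈ D, v x ≤ 2 ^ n * A → |f x| ≤ M by
    intro x hx
    obtain ⟨n, hn⟩ := pow_unbounded_of_one_lt (v x / A) one_lt_two
    exact h n x hx ((div_le_iff₀ hA).1 hn.le)
  intro n
  induction n with
  | zero =>
    intro x hx hvx
    exact (hbase x hx (by simpa using hvx)).trans (le_max_left _ _)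
  | succ n ih =>
    intro x hx hvx
    rcases le_or_gt (v x) A with hle | hlt
    · exact (hbase x hx hle).trans (le_max_left _ _)
    obtain ⟨hgx, hv, hf⟩ := hstep x hx hlt
    have := ih (g x) hgx (by rw [pow_succ] at hvx; linarith)
    nlinarith

theorem tendsto_of_tendsto_sub_mul_comp {α : Type*} {l : Filter α} {f : α → ℝ} {g : α → α}
    {r L : ℝ} (hr : |r| < 1) (hg : Tendsto g l l)
    (hf : IsBoundedUnder (· ≤ ·) l fun x => |f x|)
    (h : Tendsto (fun x => f x - r * f (g x)) l (𝓝 ((1 - r) * L))) :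
    Tendsto f l (𝓝 L) := by
  have hd : Tendsto (fun x => (f x - L) - r * (f (g x) - L)) l (𝓝 0) := by
    convert h.sub_const ((1 - r) * L) using 1
    · ext x; ring
    · simp
  obtain ⟨C, hC⟩ : ∃ C, ∀ᶠ x in l, |f x - L| ≤ C := by
    obtain ⟨M, hM⟩ := hf
    exact ⟨M + |L|, (eventually_map.1 hM).mono fun x hx => (abs_sub _ _).trans (by linarith)⟩
  -- One more step along `g` contracts the remaining error by the factor `|r|`.
  have key : ∀ ε > 0, ∀ N : ℕ, ∀ᶠ x in l, |f x - L| ≤ ε + |r| ^ N * C := by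
    intro ε hε N
    induction N with
    | zero => simpa using hC.mono fun x hx => by linarith
    | succ N ih =>
      have hδ : 0 < (1 - |r|) * ε := mul_pos (by linarith) hε
      filter_upwards [hg.eventually ih, (Metric.tendsto_nhds.1 hd _ hδ)] with x hgx hdx
      rw [Real.dist_0_eq_abs] at hdx
      calc |f x - L| = |((f x - L) - r * (f (g x) - L)) + r * (f (g x) - L)| := by ring_nf
        _ ≤ |(f x - L) - r * (f (g x) - L)| + |r| * |f (g x) - L| := by
          rw [← abs_mul]; exact abs_add_le _ _
        _ ≤ (1 - |r|) * ε + |r| * (ε + |r| ^ N * C) := by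
          gcongr
        _ = ε + |r| ^ (N + 1) * C := by ring
  rw [Metric.tendsto_nhds]
  intro ε hε
  have hpow : Tendsto (fun N : ℕ => |r| ^ N * C) atTop (𝓝 0) := by
    simpa using (tendsto_pow_atTop_nhds_zero_of_lt_one (abs_nonneg r) hr).mul_const C
  obtain ⟨N, hN⟩ := (hpow.eventually (gt_mem_nhds (half_pos hε))).exists
  filter_upwards [key (ε / 2) (half_pos hε) N] with x hx
  rw [Real.dist_eq]
  linarith

section

variable {u : ℝ → ℝ}

theorem surjOn_Ici_of_continuousOn_of_tendsto_atTop {a : ℝ} (hcont : ContinuousOn u (Set.Ici a))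
    (htop : Tendsto u atTop atTop) : Set.SurjOn u (Set.Ici a) (Set.Ici (u a)) := by
  intro y hy
  obtain ⟨b, hyb, hab⟩ := ((htop.eventually_ge_atTop y).and (eventually_ge_atTop a)).exists
  obtain ⟨x, hx, rfl⟩ :=
    intermediate_value_Icc hab (hcont.mono Set.Icc_subset_Ici_self) ⟨Set.mem_Ici.1 hy, hyb⟩
  exact ⟨x, hx.1, rfl⟩

theorem wl_nonneg_and_apply_wl (hsurj : Set.SurjOn u (Set.Ici 0) (Set.Ici (u 0))) {lam x : ℝ}
    (h : u 0 ≤ u x / lam) : 0 ≤ wl u lam x ∧ u (wl u lam x) = u x / lam :=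
  ⟨Function.invFunOn_mem (hsurj h), Function.invFunOn_eq (hsurj h)⟩

theorem tendsto_wl_atTop (hsurj : Set.SurjOn u (Set.Ici 0) (Set.Ici (u 0)))
    (hmono : StrictMonoOn u (Set.Ici 0)) (htop : Tendsto u atTop atTop) {lam : ℝ}
    (hlam : 0 < lam) : Tendsto (wl u lam) atTop atTop := by
  rw [tendsto_atTop]
  intro A
  filter_upwards [htop.eventually_ge_atTop (lam * u (max A 0))] with x hx
  have hA : u (max A 0) ≤ u x / lam := (le_div_iff₀' hlam).2 hx
  have hA₀ : u 0 ≤ u (max A 0) :=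
    hmono.monotoneOn Set.self_mem_Ici (le_max_right A 0) (le_max_right A 0)
  obtain ⟨hw₀, hwu⟩ := wl_nonneg_and_apply_wl hsurj (hA₀.trans hA)
  exact (le_max_left A 0).trans ((hmono.le_iff_le (le_max_right A 0) hw₀).1 (hwu ▸ hA))

theorem movAvg_eventuallyEq_contMean_sub (a : ℕ → ℝ) (h0 : 0 < u 0)
    (hsurj : Set.SurjOn u (Set.Ici 0) (Set.Ici (u 0)))
    (hmono : StrictMonoOn u (Set.Ici 0)) (htop : Tendsto u atTop atTop) {lam : ℝ}
    (hlam : 1 ≤ lam) :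
    movAvg u a lam =ᶠ[atTop] fun x => contMean u a x - lam⁻¹ * contMean u a (wl u lam x) := by
  filter_upwards [htop.eventually_ge_atTop (lam * u 0), eventually_ge_atTop 0] with x hux hx
  have hlam₀ : 0 < lam := one_pos.trans_le hlam
  obtain ⟨hw₀, hwu⟩ := wl_nonneg_and_apply_wl hsurj ((le_div_iff₀' hlam₀).2 hux)
  set w := wl u lam x
  have hwx : w ≤ x := by
    refine (hmono.le_iff_le hw₀ hx).1 ?_
    rw [hwu]
    exact div_le_self ((mul_pos hlam₀ h0).le.trans hux) hlam
  have hsum : ∑ k ∈ range (⌊x⌋₊ + 1), (if w < (k : ℝ) then a k else 0)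
      = ∑ k ∈ range (⌊x⌋₊ + 1), a k - ∑ k ∈ range (⌊w⌋₊ + 1), a k := by
    rw [← sum_range_ite_le_eq_sub a (Nat.succ_le_succ (Nat.floor_mono hwx))]
    refine sum_congr rfl fun k _ => ?_
    exact if_congr (by rw [Nat.add_one_le_iff, Nat.floor_lt hw₀]) rfl rfl
  have huw : u x = lam * u w := by rw [hwu]; field_simp
  simp only [movAvg, contMean]
  rw [hsum, huw]
  field_simp

theorem abs_contMean_le (a : ℕ → ℝ) (h0 : 0 < u 0) (hmono : StrictMonoOn u (Set.Ici 0))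
    {x y : ℝ} (hx : 0 ≤ x) (hxy : x ≤ y) :
    |contMean u a x| ≤ (∑ k ∈ range (⌊y⌋₊ + 1), |a k|) / u 0 := by
  have hux : u 0 ≤ u x := (hmono.le_iff_le Set.self_mem_Ici hx).2 hx
  rw [contMean, abs_mul, abs_of_pos (one_div_pos.2 (h0.trans_le hux)), one_div_mul_eq_div]
  gcongr
  calc |∑ k ∈ range (⌊x⌋₊ + 1), a k| ≤ ∑ k ∈ range (⌊x⌋₊ + 1), |a k| := abs_sum_le_sum_abs _ _
    _ ≤ ∑ k ∈ range (⌊y⌋₊ + 1), |a k| := by gcongr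

theorem isBoundedUnder_abs_contMean (a : ℕ → ℝ) (h0 : 0 < u 0)
    (hsurj : Set.SurjOn u (Set.Ici 0) (Set.Ici (u 0)))
    (hmono : StrictMonoOn u (Set.Ici 0)) (htop : Tendsto u atTop atTop) {c : ℝ}
    (hc : Tendsto (movAvg u a 2) atTop (𝓝 c)) :
    IsBoundedUnder (· ≤ ·) atTop fun x => |contMean u a x| := by
  obtain ⟨B, hB⟩ := hc.abs.isBoundedUnder_le
  have hrec := movAvg_eventuallyEq_contMean_sub a h0 hsurj hmono htop one_le_two
  obtain ⟨X₀, hX₀⟩ := eventually_atTop.1 <|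
    (eventually_map.1 hB).and <| hrec.and <| eventually_ge_atTop 0
  have hX₀₀ : 0 ≤ X₀ := (hX₀ X₀ le_rfl).2.2
  obtain ⟨X₁, hX₁u, hX₁⟩ :=
    ((htop.eventually_ge_atTop (2 * u X₀)).and (eventually_ge_atTop X₀)).exists
  have hu₀X₀ : u 0 ≤ u X₀ := (hmono.le_iff_le Set.self_mem_Ici hX₀₀).2 hX₀₀
  set K := (∑ k ∈ range (⌊X₁⌋₊ + 1), |a k|) / u 0
  have hbase : ∀ x ∈ Set.Ici X₀, u x ≤ u X₁ → |contMean u a x| ≤ K := fun x hx hux =>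
    abs_contMean_le a h0 hmono (hX₀₀.trans hx)
      ((hmono.le_iff_le (hX₀₀.trans hx) (hX₀₀.trans hX₁)).1 hux)
  -- Each step `x ↦ w₂(x)` halves `u`, until `x` falls into the compact range `[X₀, X₁]`.
  have hstep : ∀ x ∈ Set.Ici X₀, u X₁ < u x → wl u 2 x ∈ Set.Ici X₀ ∧
      2 * u (wl u 2 x) ≤ u x ∧ |contMean u a x| ≤ B + 2⁻¹ * |contMean u a (wl u 2 x)| := by
    intro x hx hux
    obtain ⟨hcx, hxeq, -⟩ := hX₀ x hx
    obtain ⟨hw₀, hwu⟩ := wl_nonneg_and_apply_wl hsurj (show u 0 ≤ u x / 2 by linarith)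
    refine ⟨(hmono.le_iff_le hX₀₀ hw₀).1 (by linarith), by linarith, ?_⟩
    have hx_rec : contMean u a x = movAvg u a 2 x + 2⁻¹ * contMean u a (wl u 2 x) := by
      rw [hxeq]; ring
    rw [hx_rec]
    calc |movAvg u a 2 x + 2⁻¹ * contMean u a (wl u 2 x)|
        ≤ |movAvg u a 2 x| + |2⁻¹ * contMean u a (wl u 2 x)| := abs_add_le _ _
      _ ≤ B + 2⁻¹ * |contMean u a (wl u 2 x)| := by
        rw [abs_mul, abs_of_pos (by norm_num : (0 : ℝ) < 2⁻¹)]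
        gcongr
  exact isBoundedUnder_of_eventually_le <| (eventually_ge_atTop X₀).mono <|
    abs_le_max_of_descent (by linarith) (by norm_num) (by norm_num) hbase hstep

theorem tendsto_contMean_iff_tendsto_movAvg (a : ℕ → ℝ) (L : ℝ) (h0 : 0 < u 0)
    (hcont : ContinuousOn u (Set.Ici 0)) (hmono : StrictMonoOn u (Set.Ici 0))
    (htop : Tendsto u atTop atTop) :
    Tendsto (contMean u a) atTop (𝓝 L) ↔
      ∀ lam : ℝ, 1 < lam → Tendsto (movAvg u a lam) atTop (𝓝 ((1 - lam⁻¹) * L)) := by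
  have hsurj := surjOn_Ici_of_continuousOn_of_tendsto_atTop hcont htop
  refine ⟨fun ht lam hlam => ?_, fun hc => ?_⟩
  · have hw := tendsto_wl_atTop hsurj hmono htop (one_pos.trans hlam)
    rw [show (1 - lam⁻¹) * L = L - lam⁻¹ * L by ring]
    exact (ht.sub ((ht.comp hw).const_mul _)).congr'
      (movAvg_eventuallyEq_contMean_sub a h0 hsurj hmono htop hlam.le).symm
  · have h2 := hc 2 one_lt_two
    exact tendsto_of_tendsto_sub_mul_comp (by norm_num [abs_of_pos])
      (tendsto_wl_atTop hsurj hmono htop two_pos)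
      (isBoundedUnder_abs_contMean a h0 hsurj hmono htop h2)
      (h2.congr' (movAvg_eventuallyEq_contMean_sub a h0 hsurj hmono htop one_le_two))

end

theorem contVoronoi_iff_contMovingAverage_general (u : ℝ → ℝ) (p q s : ℕ → ℝ) (sVal : ℝ)
    (hpos : ∀ x ≥ (0 : ℝ), 0 < u x)
    (hcont : ContinuousOn u (Set.Ici 0))
    (hmono : StrictMonoOn u (Set.Ici 0))
    (htop : Tendsto u atTop atTop) :
    Tendsto (contMean u (vconv p (fun k => q k * s k))) atTop (𝓝 sVal) ↔
      ∀ lam : ℝ, 1 < lam →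
        Tendsto (movAvg u (vconv p (fun k => q k * s k)) lam) atTop
          (𝓝 ((1 - lam⁻¹) * sVal)) :=
  tendsto_contMean_iff_tendsto_movAvg _ sVal (hpos 0 le_rfl) hcont hmono htop

/-- Theorem 7: `s_n → s (V_x,p,q,u(x))` iff
`s_n → s (𝒱_x,p,q,u(x),λ)` for all `λ > 1` (limits through a continuous variable). -/
theorem contVoronoi_iff_contMovingAverage (u : ℝ → ℝ) (p q s : ℕ → ℝ) (sVal : ℝ)
    (hpos : ∀ x ≥ (0 : ℝ), 0 < u x)
    (hcont : ContinuousOn u (Set.Ici 0))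
    (hmono : StrictMonoOn u (Set.Ici 0))
    (htop : Tendsto u atTop atTop)
    (hfloor : Tendsto (fun x : ℝ => u x / u (⌊x⌋₊ : ℝ)) atTop (𝓝 1)) :
    Tendsto (contMean u (vconv p (fun k => q k * s k))) atTop (𝓝 sVal) ↔
      ∀ lam : ℝ, 1 < lam →
        Tendsto (movAvg u (vconv p (fun k => q k * s k)) lam) atTop
          (𝓝 ((1 - lam⁻¹) * sVal)) :=
  contVoronoi_iff_contMovingAverage_general u p q s sVal hpos hcont hmono htop
end
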